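/- arXiv:1909.03797 — 12 statements merged into one kernel-verified Lean document; each statement's English description precedes it below -/
import Mathlib

section
/- Let $X$ be a chronological set and let $A$ be a nonempty past subset of $X$. Then $A$ is indecomposable (i.e., $A$ is not the union of two proper past subsets) if and only if $A$ is synoptic as a chronological set, i.e., for all $p, q \in A$ the set $I^+(p) \cap I^+(q) \cap A$ is nonempty. -/
open Set

variable {X : Type*}

def Iminus (ll : X → X → Prop) (A : Set X) : Set X := {x | ∃ a ∈ A, ll x a}

def IsPast (ll : X → X → Prop) (A : Set X) : Prop := A = Iminus ll A

def IsChronSet (ll : X → X → Prop) : Prop :=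
  Transitive ll ∧ Irreflexive ll ∧ (∀ x, ∃ y, ll x y ∨ ll y x) ∧
    ∃ S : Set X, S.Countable ∧ ∀ x y, ll x y → ∃ s ∈ S, ll x s ∧ ll s y

lemma isPast_Iminus {ll : X → X → Prop} (htrans : Transitive ll)
    (hdense : ∀ x y, ll x y → ∃ s, ll x s ∧ ll s y) (T : Set X) :
    IsPast ll (Iminus ll T) := by
  ext x
  constructor
  · rintro ⟨a, ha, hxa⟩
    obtain ⟨s, hxs, hsa⟩ := hdense x a hxa
    exact ⟨s, ⟨a, ha, hsa⟩, hxs⟩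
  · rintro ⟨b, ⟨a, ha, hba⟩, hxb⟩
    exact ⟨a, ha, htrans hxb hba⟩

/-- A nonempty past set is indecomposable iff it is synoptic (as a chronological
set with the induced relation): for all `p q ∈ A`, `I⁺(p) ∩ I⁺(q) ∩ A ≠ ∅`. -/
theorem indecomposable_iff_synoptic (ll : X → X → Prop) (h : IsChronSet ll)
    (A : Set X) (hne : A.Nonempty) (hpast : IsPast ll A) :
    (¬ ∃ B C : Set X, IsPast ll B ∧ IsPast ll C ∧ B ⊂ A ∧ C ⊂ A ∧ B ∪ C = A) ↔
      (∀ p ∈ A, ∀ q ∈ A, ∃ r ∈ A, ll p r ∧ ll q r) := by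
  obtain ⟨htrans, hirr, -, S, -, hsep⟩ := h
  have hdense : ∀ x y, ll x y → ∃ s, ll x s ∧ ll s y := by
    intro x y hxy
    obtain ⟨s, -, hs⟩ := hsep x y hxy
    exact ⟨s, hs⟩
  -- A is downward closed and every point of A has a point of A above it
  have hAdown : ∀ {x a}, a ∈ A → ll x a → x ∈ A := by
    intro x a ha hxa
    rw [hpast]; exact ⟨a, ha, hxa⟩
  have hAup : ∀ x ∈ A, ∃ a ∈ A, ll x a := by
    intro x hx
    rw [hpast] at hx; exact hx
  constructor
  · intro hind p hp q hq
    by_contra hno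
    push_neg at hno
    set B : Set X := {x | ∃ r ∈ A, ll p r ∧ ll x r} with hB
    have hBsub : B ⊆ A := by
      rintro x ⟨r, hr, -, hxr⟩
      exact hAdown hr hxr
    have hBpast : IsPast ll B := by
      ext x
      constructor
      · rintro ⟨r, hr, hpr, hxr⟩
        obtain ⟨s, hxs, hsr⟩ := hdense x r hxr
        exact ⟨s, ⟨r, hr, hpr, hsr⟩, hxs⟩
      · rintro ⟨b, ⟨r, hr, hpr, hbr⟩, hxb⟩
        exact ⟨r, hr, hpr, htrans hxb hbr⟩
    set C : Set X := Iminus ll (A \ B) with hC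
    have hCpast : IsPast ll C := isPast_Iminus htrans hdense _
    have hCsub : C ⊆ A := by
      rintro x ⟨a, ⟨ha, -⟩, hxa⟩
      exact hAdown ha hxa
    have hqB : q ∉ B := by
      rintro ⟨r, hr, hpr, hqr⟩
      exact hno r hr hpr hqr
    have hpC : p ∉ C := by
      rintro ⟨y, ⟨hyA, hyB⟩, hpy⟩
      obtain ⟨a, ha, hya⟩ := hAup y hyA
      exact hyB ⟨a, ha, htrans hpy hya, hya⟩
    apply hind
    refine ⟨B, C, hBpast, hCpast, ⟨hBsub, fun hs => hqB (hs hq)⟩,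
      ⟨hCsub, fun hs => hpC (hs hp)⟩, ?_⟩
    apply Subset.antisymm (union_subset hBsub hCsub)
    intro x hx
    obtain ⟨a, ha, hxa⟩ := hAup x hx
    by_cases haB : a ∈ B
    · obtain ⟨r, hr, hpr, har⟩ := haB
      exact Or.inl ⟨r, hr, hpr, htrans hxa har⟩
    · exact Or.inr ⟨a, ⟨ha, haB⟩, hxa⟩
  · rintro hsyn ⟨B, C, hBpast, hCpast, hBA, hCA, hBC⟩
    obtain ⟨p, hpA, hpB⟩ := exists_of_ssubset hBA
    obtain ⟨q, hqA, hqC⟩ := exists_of_ssubset hCA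
    obtain ⟨r, hrA, hpr, hqr⟩ := hsyn p hpA q hqA
    rcases (hBC ▸ hrA : r ∈ B ∪ C) with hrB | hrC
    · exact hpB (by rw [hBpast]; exact ⟨r, hrB, hpr⟩)
    · exact hqC (by rw [hCpast]; exact ⟨r, hrC, hqr⟩)
end

section
/- Let $X$ be a chronological set. A nonempty subset $A$ of $X$ is an indecomposable past set if and only if $A = I^-(c(\mathbb{N}))$ for some chronological chain $c: \mathbb{N} \to X$, i.e., a sequence with $c(n) \ll c(n+1)$ for all $n$. -/
open Set

variable {X : Type*}

/-- An indecomposable past set: nonempty, past, and not the union of two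
proper past subsets. -/
def IsIP (ll : X → X → Prop) (A : Set X) : Prop :=
  A.Nonempty ∧ IsPast ll A ∧
    ¬ ∃ B C : Set X, IsPast ll B ∧ IsPast ll C ∧ B ⊂ A ∧ C ⊂ A ∧ B ∪ C = A

/-- A nonempty subset of a chronological set is an indecomposable past set iff
it is the past of the image of a chronological chain. -/
theorem isIP_iff_past_of_chain (ll : X → X → Prop) (h : IsChronSet ll) (A : Set X) :
    IsIP ll A ↔ ∃ c : ℕ → X, (∀ n, ll (c n) (c (n + 1))) ∧ A = Iminus ll (Set.range c) := by
  obtain ⟨htrans, hirr, -, S, hScount, hSsep⟩ := h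
  constructor
  · rintro ⟨hne, hpast, hind⟩
    -- membership in A from being below a point of A
    have hAdown : ∀ {x a : X}, a ∈ A → ll x a → x ∈ A := by
      intro x a ha hxa
      rw [hpast]; exact ⟨a, ha, hxa⟩
    -- A is upward directed
    have hdir : ∀ x ∈ A, ∀ y ∈ A, ∃ z ∈ A, ll x z ∧ ll y z := by
      intro x hx y hy
      by_contra hcon
      push_neg at hcon
      apply hind
      set T : Set X := {w | w ∈ A ∧ ∀ z ∈ A, ll x z → ¬ ll w z} with hT
      refine ⟨Iminus ll T, Iminus ll {w | w ∈ A ∧ ll x w}, ?_, ?_, ?_, ?_, ?_⟩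
      · -- U past
        apply Set.Subset.antisymm
        · rintro u ⟨t, ht, hut⟩
          obtain ⟨s, -, hus, hst⟩ := hSsep u t hut
          exact ⟨s, ⟨t, ht, hst⟩, hus⟩
        · rintro z ⟨u, ⟨t, ht, hut⟩, hzu⟩
          exact ⟨t, ht, htrans hzu hut⟩
      · -- V past
        apply Set.Subset.antisymm
        · rintro v ⟨w, ⟨hwA, hxw⟩, hvw⟩
          obtain ⟨s, -, hvs, hsw⟩ := hSsep v w hvw
          exact ⟨s, ⟨w, ⟨hwA, hxw⟩, hsw⟩, hvs⟩
        · rintro z ⟨v, ⟨w, hw, hvw⟩, hzv⟩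
          exact ⟨w, hw, htrans hzv hvw⟩
      · -- U ⊊ A
        constructor
        · rintro u ⟨t, ht, hut⟩; exact hAdown ht.1 hut
        · intro hsub
          have hxU : x ∈ Iminus ll T := hsub hx
          obtain ⟨t, ⟨htA, htno⟩, hxt⟩ := hxU
          have : t ∈ Iminus ll A := by rwa [← hpast]
          obtain ⟨z, hzA, htz⟩ := this
          exact htno z hzA (htrans hxt htz) htz
      · -- V ⊊ A
        constructor
        · rintro v ⟨w, hw, hvw⟩; exact hAdown hw.1 hvw
        · intro hsub
          obtain ⟨w, ⟨hwA, hxw⟩, hyw⟩ := hsub hy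
          exact hcon w hwA hxw hyw
      · -- union
        apply Set.Subset.antisymm
        · rintro a (⟨t, ht, hat⟩ | ⟨w, hw, haw⟩)
          · exact hAdown ht.1 hat
          · exact hAdown hw.1 haw
        · intro a ha
          have : a ∈ Iminus ll A := by rwa [← hpast]
          obtain ⟨b, hbA, hab⟩ := this
          by_cases hb : ∃ z ∈ A, ll x z ∧ ll b z
          · obtain ⟨z, hzA, hxz, hbz⟩ := hb
            exact Or.inr ⟨z, ⟨hzA, hxz⟩, htrans hab hbz⟩
          · push_neg at hb
            exact Or.inl ⟨b, ⟨hbA, hb⟩, hab⟩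
    -- countable dense subset of A
    have hdense : ∀ x ∈ A, ∃ s ∈ S ∩ A, ll x s := by
      intro x hx
      have : x ∈ Iminus ll A := by rwa [← hpast]
      obtain ⟨a, haA, hxa⟩ := this
      obtain ⟨s, hsS, hxs, hsa⟩ := hSsep x a hxa
      exact ⟨s, ⟨hsS, hAdown haA hsa⟩, hxs⟩
    obtain ⟨a0, ha0⟩ := hne
    have hDne : (S ∩ A).Nonempty := by
      obtain ⟨s, hs, -⟩ := hdense a0 ha0
      exact ⟨s, hs⟩
    obtain ⟨f, hf⟩ := Set.Countable.exists_eq_range (hScount.mono Set.inter_subset_left) hDne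
    have hfA : ∀ n, f n ∈ A := by
      intro n
      have : f n ∈ S ∩ A := hf ▸ Set.mem_range_self n
      exact this.2
    -- choice function for the chain
    have hstep : ∀ (x : X), x ∈ A → ∀ n : ℕ, ∃ z, z ∈ A ∧ ll x z ∧ ll (f n) z := by
      intro x hx n
      obtain ⟨z, hzA, hxz, hfz⟩ := hdir x hx (f n) (hfA n)
      exact ⟨z, hzA, hxz, hfz⟩
    choose g hgA hg1 hg2 using hstep
    obtain ⟨z0, hz0A, hz0⟩ : ∃ z ∈ A, ll (f 0) z := by
      have : f 0 ∈ Iminus ll A := by rw [← hpast]; exact hfA 0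
      exact this
    let c : ℕ → {x : X // x ∈ A} := fun n =>
      Nat.rec ⟨z0, hz0A⟩ (fun n p => ⟨g p.1 p.2 n, hgA p.1 p.2 n⟩) n
    have hcsucc : ∀ n, (c (n + 1) : X) = g (c n).1 (c n).2 n := fun n => rfl
    refine ⟨fun n => (c n).1, ?_, ?_⟩
    · intro n
      show ll (c n).1 (c (n + 1)).1
      rw [hcsucc n]
      exact hg1 (c n).1 (c n).2 n
    · apply Set.Subset.antisymm
      · intro x hx
        obtain ⟨s, hs, hxs⟩ := hdense x hx
        have : s ∈ Set.range f := hf ▸ hs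
        obtain ⟨n, hn⟩ := this
        refine ⟨(c (n + 1)).1, ⟨n + 1, rfl⟩, ?_⟩
        have : ll (f n) (c (n + 1)).1 := by rw [hcsucc n]; exact hg2 (c n).1 (c n).2 n
        exact htrans (hn ▸ hxs) this
      · rintro x ⟨-, ⟨n, rfl⟩, hx⟩
        exact hAdown (c n).2 hx
  · rintro ⟨c, hc, rfl⟩
    have hmono : ∀ m n, m < n → ll (c m) (c n) := by
      intro m n hmn
      induction n with
      | zero => omega
      | succ n ih =>
        rcases Nat.lt_succ_iff_lt_or_eq.mp hmn with h' | h'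
        · exact htrans (ih h') (hc n)
        · exact h' ▸ hc m
    have hcA : ∀ n, c n ∈ Iminus ll (Set.range c) := fun n => ⟨c (n + 1), ⟨n + 1, rfl⟩, hc n⟩
    refine ⟨⟨c 0, hcA 0⟩, ?_, ?_⟩
    · apply Set.Subset.antisymm
      · rintro x ⟨-, ⟨n, rfl⟩, hx⟩
        exact ⟨c n, hcA n, hx⟩
      · rintro x ⟨a, ⟨-, ⟨n, rfl⟩, ha⟩, hxa⟩
        exact ⟨c n, ⟨n, rfl⟩, htrans hxa ha⟩
    · rintro ⟨B, C, hB, hC, ⟨hBsub, hBne⟩, ⟨hCsub, hCne⟩, hBC⟩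
      have hb : ∃ b ∈ Iminus ll (Set.range c), b ∉ B := by
        by_contra hcon; push_neg at hcon; exact hBne hcon
      have ha : ∃ a ∈ Iminus ll (Set.range c), a ∉ C := by
        by_contra hcon; push_neg at hcon; exact hCne hcon
      obtain ⟨b, ⟨-, ⟨m, rfl⟩, hbm⟩, hbB⟩ := hb
      obtain ⟨a, ⟨-, ⟨k, rfl⟩, hak⟩, haC⟩ := ha
      set n := max m k + 1 with hn
      have hbn : ll b (c n) := htrans hbm (hmono m n (by omega))
      have han : ll a (c n) := htrans hak (hmono k n (by omega))
      have : c n ∈ B ∪ C := hBC ▸ hcA n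
      rcases this with hcn | hcn
      · exact hbB (by rw [hB]; exact ⟨c n, hcn, hbn⟩)
      · exact haC (by rw [hC]; exact ⟨c n, hcn, han⟩)
end

section
/- Let $X$ be a chronological set and let $IP(X)$ be the set of indecomposable past subsets of $X$, equipped with the Budic–Sachs relation $A \ll_{BS} B \iff \left(\bigcap_{a \in A} I^+(a)\right) \cap B \neq \emptyset$. Then the causal relation induced by $\ll_{BS}$ coincides with set inclusion: for $A, B \in IP(X)$, one has $I^-_{BS}(A) \subseteq I^-_{BS}(B)$ and $I^+_{BS}(B) \subseteq I^+_{BS}(A)$ if and only if $A \subseteq B$. Moreover $(IP(X), \ll_{BS})$ is past-reflecting: $I^-_{BS}(A) \subseteq I^-_{BS}(B)$ implies $I^+_{BS}(B) \subseteq I^+_{BS}(A)$. -/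
open Set

variable {X : Type*}

def futureOf (ll : X → X → Prop) (p : X) : Set X := {y | ll p y}

/-- The Budic–Sachs relation on past subsets:
`A ≪_BS B` iff `(⋂_{a ∈ A} I⁺(a)) ∩ B ≠ ∅`. -/
def llBS (ll : X → X → Prop) (A B : Set X) : Prop :=
  ((⋂ a ∈ A, futureOf ll a) ∩ B).Nonempty

/-- The chronological past of an IP within `IP(X)` w.r.t. `≪_BS`. -/
def IminusBS (ll : X → X → Prop) (A : Set X) : Set (Set X) :=
  {V | IsIP ll V ∧ llBS ll V A}

/-- The chronological future of an IP within `IP(X)` w.r.t. `≪_BS`. -/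
def IplusBS (ll : X → X → Prop) (A : Set X) : Set (Set X) :=
  {V | IsIP ll V ∧ llBS ll A V}


section Aux

variable (ll : X → X → Prop)

/-- A past set is downward closed. -/
lemma IsPast.mem_of_ll {A : Set X} (hA : IsPast ll A) {x y : X}
    (hy : y ∈ A) (hxy : ll x y) : x ∈ A := by
  rw [hA]; exact ⟨y, hy, hxy⟩

/-- Key construction: given `a ≪ a₁`, there is an IP `V` containing `a`
all of whose elements lie strictly below `a₁`. -/
lemma exists_IP_between (hT : Transitive ll)
    (dens : ∀ x y, ll x y → ∃ s, ll x s ∧ ll s y)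
    {a a₁ : X} (ha : ll a a₁) :
    ∃ V : Set X, IsIP ll V ∧ a ∈ V ∧ ∀ v ∈ V, ll v a₁ := by
  classical
  -- build an increasing chain `c` starting at `a`, all below `a₁`
  let f : {x : X // ll x a₁} → {x : X // ll x a₁} := fun p =>
    ⟨(dens p.1 a₁ p.2).choose, (dens p.1 a₁ p.2).choose_spec.2⟩
  have hf : ∀ p : {x : X // ll x a₁}, ll p.1 (f p).1 := fun p =>
    (dens p.1 a₁ p.2).choose_spec.1
  let c : ℕ → {x : X // ll x a₁} := fun n => f^[n] ⟨a, ha⟩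
  have hc0 : (c 0).1 = a := rfl
  have hstep : ∀ n, ll (c n).1 (c (n + 1)).1 := by
    intro n
    have : c (n + 1) = f (c n) := Function.iterate_succ_apply' f n _
    rw [this]; exact hf (c n)
  have hmono : ∀ {n m : ℕ}, n < m → ll (c n).1 (c m).1 := by
    intro n m hnm
    induction m with
    | zero => omega
    | succ k ih =>
      rcases Nat.lt_succ_iff_lt_or_eq.mp hnm with h' | h'
      · exact hT (ih h') (hstep k)
      · rw [h']; exact hstep k
  refine ⟨{x | ∃ n, ll x (c n).1}, ⟨⟨a, 1, by rw [← hc0]; exact hstep 0⟩, ?_, ?_⟩,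
      ⟨1, by rw [← hc0]; exact hstep 0⟩, ?_⟩
  · -- past set
    apply Set.eq_of_subset_of_subset
    · rintro x ⟨n, hx⟩
      obtain ⟨s, hs1, hs2⟩ := dens x (c n).1 hx
      exact ⟨s, ⟨n, hs2⟩, hs1⟩
    · rintro x ⟨y, ⟨n, hy⟩, hxy⟩
      exact ⟨n, hT hxy hy⟩
  · -- indecomposable
    rintro ⟨B, C, hB, hC, hBV, hCV, hBC⟩
    obtain ⟨b, hbV, hbB⟩ := Set.exists_of_ssubset hBV
    obtain ⟨d, hdV, hdC⟩ := Set.exists_of_ssubset hCV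
    obtain ⟨n, hbn⟩ := hbV
    obtain ⟨m, hdm⟩ := hdV
    set k := max n m with hk
    have hbk : ll b (c k).1 := by
      rcases Nat.lt_or_ge n k with h' | h'
      · exact hT hbn (hmono h')
      · have : n = k := le_antisymm (le_max_left n m) h'
        rwa [← this]
    have hdk : ll d (c k).1 := by
      rcases Nat.lt_or_ge m k with h' | h'
      · exact hT hdm (hmono h')
      · have : m = k := le_antisymm (le_max_right n m) h'
        rwa [← this]
    have hkV : (c k).1 ∈ {x | ∃ n, ll x (c n).1} := ⟨k + 1, hstep k⟩
    rw [← hBC] at hkV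
    rcases hkV with hkB | hkC
    · exact hbB (hB.mem_of_ll ll hkB hbk)
    · exact hdC (hC.mem_of_ll ll hkC hdk)
  · rintro v ⟨n, hv⟩
    exact hT hv (c n).2

lemma llBS_mono_right {A B C : Set X} (hBC : B ⊆ C) (h : llBS ll A B) :
    llBS ll A C := by
  obtain ⟨x, hx1, hx2⟩ := h
  exact ⟨x, hx1, hBC hx2⟩

lemma llBS_anti_left (hT : Transitive ll) {A B C : Set X} (hAB : A ⊆ B)
    (h : llBS ll B C) : llBS ll A C := by
  obtain ⟨x, hx1, hx2⟩ := h
  refine ⟨x, ?_, hx2⟩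
  simp only [Set.mem_iInter] at hx1 ⊢
  exact fun a haA => hx1 a (hAB haA)

/-- The hard direction: `I⁻_BS A ⊆ I⁻_BS B → A ⊆ B`. -/
lemma subset_of_IminusBS_subset (hT : Transitive ll)
    (dens : ∀ x y, ll x y → ∃ s, ll x s ∧ ll s y)
    {A B : Set X} (hA : IsIP ll A) (hB : IsIP ll B)
    (hsub : IminusBS ll A ⊆ IminusBS ll B) : A ⊆ B := by
  intro a haA
  -- get `a₁ ∈ A` with `a ≪ a₁`
  have : a ∈ Iminus ll A := hA.2.1 ▸ haA
  obtain ⟨a₁, ha₁A, ha⟩ := this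
  obtain ⟨V, hV, haV, hVa₁⟩ := exists_IP_between ll hT dens ha
  have hVA : V ∈ IminusBS ll A := by
    refine ⟨hV, a₁, ?_, ha₁A⟩
    simp only [Set.mem_iInter]
    exact fun v hv => hVa₁ v hv
  have hVB := hsub hVA
  obtain ⟨z, hz1, hz2⟩ := hVB.2
  simp only [Set.mem_iInter] at hz1
  exact hB.2.1.mem_of_ll ll hz2 (hz1 a haV)

end Aux

/-- On `IP(X)`, the causal relation induced by `≪_BS` is set inclusion, and
`(IP(X), ≪_BS)` is past-reflecting. -/
theorem causalBS_eq_subset_and_pastReflecting (ll : X → X → Prop) (h : IsChronSet ll) :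
    (∀ A B : Set X, IsIP ll A → IsIP ll B →
      ((IminusBS ll A ⊆ IminusBS ll B ∧ IplusBS ll B ⊆ IplusBS ll A) ↔ A ⊆ B)) ∧
    (∀ A B : Set X, IsIP ll A → IsIP ll B →
      IminusBS ll A ⊆ IminusBS ll B → IplusBS ll B ⊆ IplusBS ll A) := by
  obtain ⟨hT, hIrr, hConn, S, hScount, hSdens⟩ := h
  have dens : ∀ x y, ll x y → ∃ s, ll x s ∧ ll s y := fun x y hxy => by
    obtain ⟨s, _, hs⟩ := hSdens x y hxy; exact ⟨s, hs⟩
  have main : ∀ A B : Set X, IsIP ll A → IsIP ll B →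
      IminusBS ll A ⊆ IminusBS ll B → A ⊆ B :=
    fun A B hA hB hsub => subset_of_IminusBS_subset ll hT dens hA hB hsub
  have easy₁ : ∀ A B : Set X, A ⊆ B → IminusBS ll A ⊆ IminusBS ll B := by
    rintro A B hAB V ⟨hV, hVA⟩
    exact ⟨hV, llBS_mono_right ll hAB hVA⟩
  have easy₂ : ∀ A B : Set X, A ⊆ B → IplusBS ll B ⊆ IplusBS ll A := by
    rintro A B hAB V ⟨hV, hBV⟩
    exact ⟨hV, llBS_anti_left ll hT hAB hBV⟩
  constructor
  · intro A B hA hB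
    constructor
    · rintro ⟨h1, _⟩
      exact main A B hA hB h1
    · intro hAB
      exact ⟨easy₁ A B hAB, easy₂ A B hAB⟩
  · intro A B hA hB h1
    exact easy₂ A B (main A B hA hB h1)
end

section
/- Let $X$ be a chronological set. The map $I^-_{BS}$ is injective on the set of past subsets of $X$: if $A, B \subseteq X$ are past sets with $\{P \in IP(X) : P \ll_{BS} A\} = \{P \in IP(X) : P \ll_{BS} B\}$, then $A = B$. -/
open Set

variable {X : Type*}

lemma chainIP_aux (ll : X → X → Prop) (htrans : Transitive ll)
    (hd : ∀ x y : X, ll x y → ∃ s, ll x s ∧ ll s y)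
    {x a : X} (hxa : ll x a) :
    ∃ P : Set X, IsIP ll P ∧ x ∈ P ∧ ∀ w ∈ P, ll w a := by
  let f : {w : X // ll w a} → {w : X // ll w a} :=
    fun w => ⟨(hd w.1 a w.2).choose, (hd w.1 a w.2).choose_spec.2⟩
  let z : ℕ → {w : X // ll w a} := fun n => f^[n] ⟨x, hxa⟩
  have hstep : ∀ n, ll (z n).1 (z (n + 1)).1 := by
    intro n
    have hz : z (n + 1) = f (z n) := Function.iterate_succ_apply' f n _
    rw [hz]
    exact (hd (z n).1 a (z n).2).choose_spec.1
  have hmono : ∀ m n : ℕ, m < n → ll (z m).1 (z n).1 := by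
    intro m n hmn
    induction n with
    | zero => omega
    | succ k ih =>
      rcases Nat.lt_succ_iff_lt_or_eq.mp hmn with h' | h'
      · exact htrans (ih h') (hstep k)
      · exact h' ▸ hstep m
  have hle : ∀ m n : ℕ, m ≤ n → ∀ w, ll w (z m).1 → ll w (z n).1 := by
    intro m n hmn w hw
    rcases lt_or_eq_of_le hmn with h' | h'
    · exact htrans hw (hmono m n h')
    · subst h'; exact hw
  set P : Set X := {w | ∃ n, ll w (z n).1} with hP
  have hz0 : (z 0).1 = x := rfl
  have hxP : x ∈ P := ⟨1, hz0 ▸ hstep 0⟩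
  have hPpast : IsPast ll P := by
    apply Set.Subset.antisymm
    · rintro w ⟨n, hwn⟩
      obtain ⟨s, hws, hsn⟩ := hd w (z n).1 hwn
      exact ⟨s, ⟨n, hsn⟩, hws⟩
    · rintro w ⟨u, ⟨n, hun⟩, hwu⟩
      exact ⟨n, htrans hwu hun⟩
  refine ⟨P, ⟨⟨x, hxP⟩, hPpast, ?_⟩, hxP, ?_⟩
  · rintro ⟨C, D, hCp, hDp, hCs, hDs, hCD⟩
    obtain ⟨b, hbP, hbC⟩ := Set.not_subset.mp (fun hs => hCs.2 hs)
    obtain ⟨c, hcP, hcD⟩ := Set.not_subset.mp (fun hs => hDs.2 hs)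
    obtain ⟨n, hbn⟩ := hbP
    obtain ⟨m, hcm⟩ := hcP
    set N := max n m with hN
    have hbz : ll b (z N).1 := hle n N (le_max_left n m) b hbn
    have hcz : ll c (z N).1 := hle m N (le_max_right n m) c hcm
    have hzP : (z N).1 ∈ P := ⟨N + 1, hstep N⟩
    rw [← hCD] at hzP
    rcases hzP with hz | hz
    · exact hbC (hCp ▸ ⟨(z N).1, hz, hbz⟩)
    · exact hcD (hDp ▸ ⟨(z N).1, hz, hcz⟩)
  · rintro w ⟨n, hwn⟩
    exact htrans hwn (z n).2

/-- `I⁻_BS` is injective on past subsets of `X`. -/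
theorem IminusBS_injective_on_past (ll : X → X → Prop) (h : IsChronSet ll)
    (A B : Set X) (hA : IsPast ll A) (hB : IsPast ll B)
    (heq : {P : Set X | IsIP ll P ∧ llBS ll P A} = {P : Set X | IsIP ll P ∧ llBS ll P B}) :
    A = B := by
  obtain ⟨htrans, hirr, hconnex, S, hScount, hdense⟩ := h
  have hd : ∀ x y : X, ll x y → ∃ s, ll x s ∧ ll s y := by
    intro x y hxy
    obtain ⟨s, _, h1, h2⟩ := hdense x y hxy
    exact ⟨s, h1, h2⟩
  have main : ∀ A B : Set X, IsPast ll A → IsPast ll B →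
      {P : Set X | IsIP ll P ∧ llBS ll P A} ⊆ {P : Set X | IsIP ll P ∧ llBS ll P B} →
      A ⊆ B := by
    intro A B hA hB hsub x hx
    obtain ⟨a, haA, hxa⟩ : x ∈ Iminus ll A := hA ▸ hx
    obtain ⟨a', ha'A, haa'⟩ : a ∈ Iminus ll A := hA ▸ haA
    obtain ⟨P, hPIP, hxP, hPa⟩ := chainIP_aux ll htrans hd hxa
    have hmem : P ∈ {P : Set X | IsIP ll P ∧ llBS ll P A} := by
      refine ⟨hPIP, ⟨a', ?_, ha'A⟩⟩
      simp only [Set.mem_iInter]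
      intro w hw
      exact htrans (hPa w hw) haa'
    obtain ⟨-, b, hbI, hbB⟩ := hsub hmem
    simp only [Set.mem_iInter] at hbI
    have hxb : ll x b := hbI x hxP
    exact hB ▸ ⟨b, hbB, hxb⟩
  exact Set.Subset.antisymm (main A B hA hB heq.subset) (main B A hB hA heq.symm.subset)
end

section
/- Let $X$ be a topological space with a chronology $\ll$ such that all sets $I^\pm(p)$ are open (a regular chronological space), and let $A: \mathbb{N} \to P(X)$ be a sequence of past subsets of $X$. Then the set-theoretic $\limsup A := \bigcap_n \bigcup_{m \geq n} A(m)$ and $\liminf A := \bigcup_n \bigcap_{m \geq n} A(m)$ are almost past sets, i.e., $I^-(\limsup A) \subseteq \mathrm{int}(\limsup A)$ and $I^-(\liminf A) \subseteq \mathrm{int}(\liminf A)$. -/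
open Set

variable {X : Type*}

def pastOf (ll : X → X → Prop) (p : X) : Set X := {y | ll y p}

lemma past_mem {ll : X → X → Prop} {A : Set X} (hA : IsPast ll A)
    {a y : X} (ha : a ∈ A) (hy : ll y a) : y ∈ A := by
  rw [hA]; exact ⟨a, ha, hy⟩

/-- Set-theoretic limsup and liminf of a sequence of past sets in a regular
chronological space (all `I±(p)` open) are almost past. -/
theorem limsup_liminf_almostPast [TopologicalSpace X] (ll : X → X → Prop)
    (h : IsChronSet ll)
    (hopen : ∀ p : X, IsOpen (futureOf ll p) ∧ IsOpen (pastOf ll p))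
    (A : ℕ → Set X) (hA : ∀ n, IsPast ll (A n)) :
    Iminus ll (⋂ n, ⋃ m ≥ n, A m) ⊆ interior (⋂ n, ⋃ m ≥ n, A m) ∧
    Iminus ll (⋃ n, ⋂ m ≥ n, A m) ⊆ interior (⋃ n, ⋂ m ≥ n, A m) := by
  constructor
  · rintro x ⟨a, ha, hxa⟩
    apply mem_interior.2 ⟨pastOf ll a, ?_, (hopen a).2, hxa⟩
    intro y hy
    simp only [mem_iInter, mem_iUnion] at ha ⊢
    intro n
    obtain ⟨m, hmn, ham⟩ := ha n
    exact ⟨m, hmn, past_mem (hA m) ham hy⟩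
  · rintro x ⟨a, ha, hxa⟩
    apply mem_interior.2 ⟨pastOf ll a, ?_, (hopen a).2, hxa⟩
    intro y hy
    simp only [mem_iUnion, mem_iInter] at ha ⊢
    obtain ⟨n, han⟩ := ha
    exact ⟨n, fun m hmn => past_mem (hA m) (han m hmn) hy⟩
end

section
/- Let $X$ be a chronologically dense regular chronological space. If $B \subseteq X$ is almost past (i.e., $I^-(B) \subseteq \mathrm{int}(B)$), then $B \subseteq \mathrm{cl}(\mathrm{int}(B))$, and consequently $\mathrm{cl}(\mathrm{int}(B)) = \mathrm{cl}(B)$ and $\mathrm{cl}(B) = \mathrm{cl}(I^-(B))$. -/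
open Set

variable {X : Type*}

/-- In a chronologically dense regular chronological space (with empty past
boundary), every almost past set `B` satisfies `B ⊆ cl(int B)`,
`cl(int B) = cl B`, and `cl B = cl(I⁻(B))`. -/
theorem almostPast_closure [TopologicalSpace X] (ll : X → X → Prop)
    (h : IsChronSet ll)
    (hopen : ∀ p : X, IsOpen (futureOf ll p) ∧ IsOpen (pastOf ll p))
    (hdenseFut : ∀ p : X, (futureOf ll p).Nonempty → p ∈ closure (futureOf ll p))
    (hfullPast : ∀ p : X, (pastOf ll p).Nonempty)
    (hdensePast : ∀ p : X, p ∈ closure (pastOf ll p))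
    (B : Set X) (hB : Iminus ll B ⊆ interior B) :
    B ⊆ closure (interior B) ∧ closure (interior B) = closure B ∧
      closure B = closure (Iminus ll B) := by
  have key : ∀ p ∈ B, pastOf ll p ⊆ Iminus ll B := by
    intro p hp y hy
    exact ⟨p, hp, hy⟩
  have hBsub : B ⊆ closure (Iminus ll B) := fun p hp =>
    closure_mono (key p hp) (hdensePast p)
  have hBint : B ⊆ closure (interior B) := fun p hp =>
    closure_mono ((key p hp).trans hB) (hdensePast p)
  refine ⟨hBint, ?_, ?_⟩
  · exact le_antisymm (closure_mono interior_subset)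
      (closure_minimal hBint isClosed_closure)
  · exact le_antisymm (closure_minimal hBsub isClosed_closure)
      (closure_mono (hB.trans interior_subset))
end

section
/- Let $(X, d_0)$ be a Heine–Borel metric space with basepoint $x_0$, and let $d_1$ be Busemann's metric on nonempty closed subsets. Then $d_1$ takes only finite values, is a metric, and for two basepoints $x_0, x_0'$, the metrics $d_1^{x_0}$ and $d_1^{x_0'}$ are uniformly equivalent. -/
open Set Metric EMetric ENNReal

variable {X : Type*}

noncomputable def ediff (a b : ℝ≥0∞) : ℝ≥0∞ := (a - b) ⊔ (b - a)

/-- Busemann's distance on closed subsets, with basepoint `x₀`. -/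
noncomputable def d1e [MetricSpace X] (x₀ : X) (A B : Set X) : ℝ≥0∞ :=
  ⨆ x : X, ediff (infEdist x A) (infEdist x B) * ENNReal.ofReal (Real.exp (-(dist x₀ x)))

lemma ediff_comm' (a b : ℝ≥0∞) : ediff a b = ediff b a := sup_comm _ _

lemma ediff_self' (a : ℝ≥0∞) : ediff a a = 0 := by simp [ediff]

lemma ediff_eq_zero {a b : ℝ≥0∞} (h : ediff a b = 0) : a = b := by
  have h1 : a - b = 0 := le_antisymm (le_sup_left.trans h.le) zero_le
  have h2 : b - a = 0 := le_antisymm (le_sup_right.trans h.le) zero_le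
  exact le_antisymm (tsub_eq_zero_iff_le.mp h1) (tsub_eq_zero_iff_le.mp h2)

lemma ediff_triangle (a b c : ℝ≥0∞) : ediff a c ≤ ediff a b + ediff b c := by
  have h1 : a - c ≤ (a - b) + (b - c) := by
    rw [tsub_le_iff_right]
    calc a ≤ a - b + b := le_tsub_add
    _ ≤ (a - b) + ((b - c) + c) := by gcongr; exact le_tsub_add
    _ = (a - b) + (b - c) + c := by ring
  have h2 : c - a ≤ (b - a) + (c - b) := by
    rw [tsub_le_iff_right]
    calc c ≤ c - b + b := le_tsub_add
    _ ≤ (c - b) + ((b - a) + a) := by gcongr; exact le_tsub_add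
    _ = (b - a) + (c - b) + a := by ring
  refine sup_le (h1.trans ?_) (h2.trans ?_)
  · exact add_le_add le_sup_left le_sup_left
  · exact add_le_add le_sup_right le_sup_right

lemma d1e_le_mul [MetricSpace X] (x₀ x₀' : X) (A B : Set X) :
    d1e x₀' A B ≤ ENNReal.ofReal (Real.exp (dist x₀ x₀')) * d1e x₀ A B := by
  set K := ENNReal.ofReal (Real.exp (dist x₀ x₀'))
  refine iSup_le fun x => ?_
  have hw : ENNReal.ofReal (Real.exp (-(dist x₀' x)))
      ≤ K * ENNReal.ofReal (Real.exp (-(dist x₀ x))) := by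
    rw [← ENNReal.ofReal_mul (Real.exp_nonneg _), ← Real.exp_add]
    refine ENNReal.ofReal_le_ofReal (Real.exp_le_exp.mpr ?_)
    have := dist_triangle x₀ x₀' x
    linarith [dist_triangle x₀' x₀ x, dist_comm x₀ x₀']
  calc ediff (infEdist x A) (infEdist x B) * ENNReal.ofReal (Real.exp (-(dist x₀' x)))
      ≤ ediff (infEdist x A) (infEdist x B) *
        (K * ENNReal.ofReal (Real.exp (-(dist x₀ x)))) := by gcongr
    _ = K * (ediff (infEdist x A) (infEdist x B) *
        ENNReal.ofReal (Real.exp (-(dist x₀ x)))) := by ring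
    _ ≤ K * d1e x₀ A B := by
        gcongr
        exact le_iSup (fun x => ediff (infEdist x A) (infEdist x B) *
          ENNReal.ofReal (Real.exp (-(dist x₀ x)))) x

/-- On a Heine–Borel (proper) metric space, Busemann's distance `d₁` takes only
finite values on nonempty closed sets, is a metric (vanishes exactly on equal
sets, is symmetric, and satisfies the triangle inequality), and for two
basepoints the resulting metrics are uniformly equivalent. -/
theorem d1e_metric [MetricSpace X] [ProperSpace X] :
    (∀ (x₀ : X) (A B : Set X), IsClosed A → IsClosed B → A.Nonempty → B.Nonempty →
      d1e x₀ A B ≠ ⊤) ∧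
    (∀ (x₀ : X) (A B : Set X), IsClosed A → IsClosed B → A.Nonempty → B.Nonempty →
      (d1e x₀ A B = 0 ↔ A = B)) ∧
    (∀ (x₀ : X) (A B : Set X), d1e x₀ A B = d1e x₀ B A) ∧
    (∀ (x₀ : X) (A B C : Set X), d1e x₀ A C ≤ d1e x₀ A B + d1e x₀ B C) ∧
    (∀ x₀ x₀' : X, ∀ ε : ℝ≥0∞, 0 < ε → ∃ δ : ℝ≥0∞, 0 < δ ∧
      ∀ A B : Set X, IsClosed A → IsClosed B → A.Nonempty → B.Nonempty →
        d1e x₀ A B < δ → d1e x₀' A B < ε) := by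
  refine ⟨?_, ?_, ?_, ?_, ?_⟩
  · -- finiteness
    rintro x₀ A B _ _ ⟨a, ha⟩ ⟨b, hb⟩
    set C : ℝ≥0∞ := edist x₀ a ⊔ edist x₀ b
    have hC : C ≠ ⊤ := by simp [C, edist_ne_top]
    have hbound : d1e x₀ A B ≤ 1 + C := by
      refine iSup_le fun x => ?_
      have hA : infEdist x A ≤ edist x₀ x + C := by
        calc infEdist x A ≤ edist x a := infEdist_le_edist_of_mem ha
        _ ≤ edist x x₀ + edist x₀ a := edist_triangle _ _ _
        _ ≤ edist x₀ x + C := by rw [edist_comm]; gcongr; exact le_sup_left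
      have hB : infEdist x B ≤ edist x₀ x + C := by
        calc infEdist x B ≤ edist x b := infEdist_le_edist_of_mem hb
        _ ≤ edist x x₀ + edist x₀ b := edist_triangle _ _ _
        _ ≤ edist x₀ x + C := by rw [edist_comm]; gcongr; exact le_sup_right
      have he : ediff (infEdist x A) (infEdist x B) ≤ edist x₀ x + C := by
        refine sup_le ((tsub_le_self).trans hA) ((tsub_le_self).trans hB)
      calc ediff (infEdist x A) (infEdist x B) * ENNReal.ofReal (Real.exp (-(dist x₀ x)))
          ≤ (edist x₀ x + C) * ENNReal.ofReal (Real.exp (-(dist x₀ x))) := by gcongr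
        _ = edist x₀ x * ENNReal.ofReal (Real.exp (-(dist x₀ x)))
            + C * ENNReal.ofReal (Real.exp (-(dist x₀ x))) := by ring
        _ ≤ 1 + C := by
            gcongr
            · rw [edist_dist, ← ENNReal.ofReal_mul dist_nonneg, ← ENNReal.ofReal_one]
              refine ENNReal.ofReal_le_ofReal ?_
              have h := Real.add_one_le_exp (dist x₀ x)
              rw [Real.exp_neg]
              have hpos : 0 < Real.exp (dist x₀ x) := Real.exp_pos _
              calc dist x₀ x * (Real.exp (dist x₀ x))⁻¹
                  ≤ Real.exp (dist x₀ x) * (Real.exp (dist x₀ x))⁻¹ := by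
                    gcongr; linarith [dist_nonneg (x := x₀) (y := x)]
                _ = 1 := mul_inv_cancel₀ hpos.ne'
            · nth_rewrite 2 [← mul_one C]
              gcongr
              rw [← ENNReal.ofReal_one]
              exact ENNReal.ofReal_le_ofReal (Real.exp_le_one_iff.mpr (neg_nonpos.mpr dist_nonneg))
    exact ne_top_of_le_ne_top (by simp [hC]) hbound
  · -- zero iff equal
    intro x₀ A B hA hB _ _
    constructor
    · intro h
      have hx : ∀ x, infEdist x A = infEdist x B := by
        intro x
        have := le_of_eq h
        rw [d1e, iSup_le_iff] at this
        have h0 := le_antisymm (this x) zero_le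
        rcases mul_eq_zero.mp h0 with h1 | h1
        · exact ediff_eq_zero h1
        · exact absurd h1 (by simp [Real.exp_pos])
      ext x
      rw [mem_iff_infEdist_zero_of_closed hA, mem_iff_infEdist_zero_of_closed hB,
        show infEDist x A = infEDist x B from hx x]
    · rintro rfl
      simp [d1e, ediff_self']
  · -- symmetry
    intro x₀ A B
    simp only [d1e, ediff_comm']
  · -- triangle
    intro x₀ A B C
    refine iSup_le fun x => ?_
    calc ediff (infEdist x A) (infEdist x C) * ENNReal.ofReal (Real.exp (-(dist x₀ x)))
        ≤ (ediff (infEdist x A) (infEdist x B) + ediff (infEdist x B) (infEdist x C))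
          * ENNReal.ofReal (Real.exp (-(dist x₀ x))) := by
          gcongr; exact ediff_triangle _ _ _
      _ = ediff (infEdist x A) (infEdist x B) * ENNReal.ofReal (Real.exp (-(dist x₀ x)))
          + ediff (infEdist x B) (infEdist x C) * ENNReal.ofReal (Real.exp (-(dist x₀ x))) := by
          ring
      _ ≤ d1e x₀ A B + d1e x₀ B C := by
          refine add_le_add ?_ ?_
          · exact le_iSup (fun x => ediff (infEdist x A) (infEdist x B) *
              ENNReal.ofReal (Real.exp (-(dist x₀ x)))) x
          · exact le_iSup (fun x => ediff (infEdist x B) (infEdist x C) *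
              ENNReal.ofReal (Real.exp (-(dist x₀ x)))) x
  · -- uniform equivalence
    intro x₀ x₀' ε hε
    set K := ENNReal.ofReal (Real.exp (dist x₀ x₀')) with hK
    have hK0 : K ≠ 0 := by simp [hK, Real.exp_pos]
    have hKtop : K ≠ ⊤ := ENNReal.ofReal_ne_top
    refine ⟨ε / K, ENNReal.div_pos hε.ne' hKtop, fun A B _ _ _ _ h => ?_⟩
    calc d1e x₀' A B ≤ K * d1e x₀ A B := d1e_le_mul x₀ x₀' A B
      _ < K * (ε / K) := by
          rw [ENNReal.mul_lt_mul_iff_right hK0 hKtop]; exact h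
      _ ≤ ε := ENNReal.mul_div_le
end

section
/- Let $X$ be a regular chronological space (all $I^\pm(p)$ open and indecomposable). Then the maps $p \mapsto I^+(p)$ and $p \mapsto I^-(p)$ are inner-continuous: for every $p \in X$ and every compact $C \subseteq I^+(p)$, there is an open neighborhood $U$ of $p$ such that $C \subseteq I^+(q)$ for all $q \in U$ (and dually for $I^-$). -/
open Set

variable {X : Type*}

def Iplus (ll : X → X → Prop) (A : Set X) : Set X := {x | ∃ a ∈ A, ll a x}

def IsFuture (ll : X → X → Prop) (A : Set X) : Prop := A = Iplus ll A

/-- Indecomposability as a past set. -/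
def IndecPast (ll : X → X → Prop) (A : Set X) : Prop :=
  ¬ ∃ B C : Set X, IsPast ll B ∧ IsPast ll C ∧ B ⊂ A ∧ C ⊂ A ∧ B ∪ C = A

/-- Indecomposability as a future set. -/
def IndecFuture (ll : X → X → Prop) (A : Set X) : Prop :=
  ¬ ∃ B C : Set X, IsFuture ll B ∧ IsFuture ll C ∧ B ⊂ A ∧ C ⊂ A ∧ B ∪ C = A

/-- In a regular chronological space (all `I±(p)` open and indecomposable), the
maps `p ↦ I±(p)` are inner-continuous. -/
theorem Ipm_innerContinuous [TopologicalSpace X] (ll : X → X → Prop)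
    (h : IsChronSet ll)
    (hreg : ∀ p : X, IsOpen (futureOf ll p) ∧ IsOpen (pastOf ll p) ∧
      IndecFuture ll (futureOf ll p) ∧ IndecPast ll (pastOf ll p)) :
    (∀ p : X, ∀ C : Set X, IsCompact C → C ⊆ futureOf ll p →
      ∃ U : Set X, IsOpen U ∧ p ∈ U ∧ ∀ q ∈ U, C ⊆ futureOf ll q) ∧
    (∀ p : X, ∀ C : Set X, IsCompact C → C ⊆ pastOf ll p →
      ∃ U : Set X, IsOpen U ∧ p ∈ U ∧ ∀ q ∈ U, C ⊆ pastOf ll q) := by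

  obtain ⟨htrans, -, -, S, -, hdense⟩ := h
  constructor
  · intro p C hC hCp
    choose s hsS hs1 hs2 using fun (c : C) => hdense p c (hCp c.2)
    obtain ⟨t, ht⟩ := hC.elim_finite_subcover (fun c : C => futureOf ll (s c))
      (fun c => (hreg (s c)).1)
      (fun x hx => Set.mem_iUnion.2 ⟨⟨x, hx⟩, hs2 ⟨x, hx⟩⟩)
    refine ⟨⋂ c ∈ t, pastOf ll (s c), isOpen_biInter_finset (fun c _ => (hreg (s c)).2.1),
      Set.mem_iInter₂.2 (fun c _ => hs1 c), ?_⟩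
    intro q hq x hx
    obtain ⟨c, hct, hxc⟩ := Set.mem_iUnion₂.1 (ht hx)
    exact htrans (Set.mem_iInter₂.1 hq c hct) hxc
  · intro p C hC hCp
    choose s hsS hs1 hs2 using fun (c : C) => hdense c p (hCp c.2)
    obtain ⟨t, ht⟩ := hC.elim_finite_subcover (fun c : C => pastOf ll (s c))
      (fun c => (hreg (s c)).2.1)
      (fun x hx => Set.mem_iUnion.2 ⟨⟨x, hx⟩, hs1 ⟨x, hx⟩⟩)
    refine ⟨⋂ c ∈ t, futureOf ll (s c), isOpen_biInter_finset (fun c _ => (hreg (s c)).1),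
      Set.mem_iInter₂.2 (fun c _ => hs2 c), ?_⟩
    intro q hq x hx
    obtain ⟨c, hct, hxc⟩ := Set.mem_iUnion₂.1 (ht hx)
    exact htrans hxc (Set.mem_iInter₂.1 hq c hct)
end

section
/- Let $X$ be a chronologically dense chronological space with causal relation $\leq = \alpha(\ll)$ in which all sets $I^\pm(p)$ are open, and suppose $J^+ := \{(x,y) : x \leq y\}$ has the property that $J^\pm(p)$ is closed for every $p$ (causal simplicity). Then $J^\pm(p) = \mathrm{cl}(I^\pm(p))$ for every $p \in X$. -/
open Set

variable {X : Type*}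

/-- The causal relation `α(≪)`. -/
def causalRel (ll : X → X → Prop) (x y : X) : Prop :=
  futureOf ll y ⊆ futureOf ll x ∧ pastOf ll x ⊆ pastOf ll y

def Jplus (ll : X → X → Prop) (p : X) : Set X := {y | causalRel ll p y}

def Jminus (ll : X → X → Prop) (p : X) : Set X := {y | causalRel ll y p}

/-- In a chronologically dense, full chronological space with open chronological
cones which is causally simple, `J±(p) = cl(I±(p))`. -/
theorem Jpm_eq_closure_Ipm [TopologicalSpace X] (ll : X → X → Prop)
    (h : IsChronSet ll)
    (hopen : ∀ p : X, IsOpen (futureOf ll p) ∧ IsOpen (pastOf ll p))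
    (hfull : ∀ p : X, (futureOf ll p).Nonempty ∧ (pastOf ll p).Nonempty)
    (hdense : ∀ p : X, p ∈ closure (futureOf ll p) ∧ p ∈ closure (pastOf ll p))
    (hcs : ∀ p : X, IsClosed (Jplus ll p) ∧ IsClosed (Jminus ll p)) :
    ∀ p : X, Jplus ll p = closure (futureOf ll p) ∧
      Jminus ll p = closure (pastOf ll p) := by
  intro p
  obtain ⟨htr, -, -, -⟩ := h
  have hIJp : futureOf ll p ⊆ Jplus ll p := by
    intro y hy
    exact ⟨fun z hz => htr hy hz, fun z hz => htr hz hy⟩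
  have hIJm : pastOf ll p ⊆ Jminus ll p := by
    intro y hy
    exact ⟨fun z hz => htr hy hz, fun z hz => htr hz hy⟩
  constructor
  · apply Set.Subset.antisymm
    · intro y hy
      exact closure_mono hy.1 ((hdense y).1)
    · exact closure_minimal hIJp (hcs p).1
  · apply Set.Subset.antisymm
    · intro y hy
      exact closure_mono hy.2 ((hdense y).2)
    · exact closure_minimal hIJm (hcs p).2
end

section
/- In a chronological space in which $J^-(p)$ is closed for all $p$ (past causal simplicity) and $J^+ \subseteq X \times X$ is closed, the set $J^+(C)$ is closed for every compact set $C \subseteq X$, provided $X$ is a metrizable (or sequential) topological space. -/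
open Set

variable {X : Type*}

/-- In a metrizable chronological space in which all `J⁻(p)` are closed and the
causal relation `J⁺ ⊆ X × X` is closed, `J⁺(C)` is closed for every compact `C`. -/
theorem Jplus_compact_closed [TopologicalSpace X] [TopologicalSpace.MetrizableSpace X]
    (ll : X → X → Prop) (h : IsChronSet ll)
    (hJm : ∀ p : X, IsClosed {y | causalRel ll y p})
    (hJ : IsClosed {q : X × X | causalRel ll q.1 q.2})
    (C : Set X) (hC : IsCompact C) :
    IsClosed {y : X | ∃ x ∈ C, causalRel ll x y} := by
  letI : MetricSpace X := TopologicalSpace.metrizableSpaceMetric X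
  rw [← isSeqClosed_iff_isClosed]
  intro u y hu huy
  choose x hxC hxy using hu
  obtain ⟨p, hpC, φ, hφ, hφp⟩ := hC.tendsto_subseq hxC
  refine ⟨p, hpC, ?_⟩
  have ht : Filter.Tendsto (fun n => ((x (φ n)), u (φ n))) Filter.atTop (nhds (p, y)) :=
    hφp.prodMk_nhds (huy.comp hφ.tendsto_atTop)
  exact hJ.mem_of_tendsto ht (Filter.Eventually.of_forall fun n => hxy (φ n))
end

section
/- Let $Y$ be a distinguishing chronological set and define, for a sequence $a: \mathbb{N} \to Y$, the sets $\liminf^-(a) := \bigcup_n J^{-\cap}(\{a(m) : m \geq n\})$ and $\limsup^-(a) := \bigcup\{J^{-\cap}(a \circ j(\mathbb{N})) : j: \mathbb{N} \nearrow \mathbb{N}\}$, and $L_+(a) := \{v : I^-(\liminf^-(a)) = I^-(\limsup^-(a)) = I^-(v)\}$. Then: (1) if $a$ is constant with value $p$, then $L_+(a) = \{p\}$; (2) if $L_+(a) = \{p\}$, then $L_+(b) = \{p\}$ for every subsequence $b$ of $a$. -/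
open Set

variable {X : Type*}

/-- `liminf⁻(a) = ⋃_n ⋂_{m ≥ n} J⁻(a m)`. -/
def liminfM (ll : X → X → Prop) (a : ℕ → X) : Set X :=
  ⋃ n, ⋂ m, ⋂ _ : n ≤ m, Jminus ll (a m)

/-- `limsup⁻(a) = ⋃ {⋂_n J⁻(a (j n)) : j strictly increasing}`. -/
def limsupM (ll : X → X → Prop) (a : ℕ → X) : Set X :=
  ⋃ j ∈ {j : ℕ → ℕ | StrictMono j}, ⋂ n, Jminus ll (a (j n))

/-- The limit operator of `τ₊`. -/
def Lplus (ll : X → X → Prop) (a : ℕ → X) : Set X :=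
  {v | Iminus ll (liminfM ll a) = Iminus ll (limsupM ll a) ∧
       Iminus ll (liminfM ll a) = pastOf ll v}

/-- Two basic properties of the limit operator `L₊` on a distinguishing
chronological set: constant sequences converge to their value, and limits pass
to subsequences. -/
theorem Lplus_const_and_subseq (ll : X → X → Prop) (h : IsChronSet ll)
    (hdist : ∀ p q : X, pastOf ll p = pastOf ll q → p = q) :
    (∀ p : X, Lplus ll (fun _ => p) = {p}) ∧
    (∀ (a : ℕ → X) (p : X), Lplus ll a = {p} →
      ∀ j : ℕ → ℕ, StrictMono j → Lplus ll (a ∘ j) = {p}) := by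
  have hIm : ∀ (A B : Set X), A ⊆ B → Iminus ll A ⊆ Iminus ll B := by
    rintro A B hAB x ⟨a, ha, hx⟩; exact ⟨a, hAB ha, hx⟩
  have hle : ∀ (a : ℕ → X), liminfM ll a ⊆ limsupM ll a := by
    rintro a x hx
    simp only [liminfM, mem_iUnion, mem_iInter] at hx
    obtain ⟨n, hn⟩ := hx
    refine mem_iUnion₂.2 ⟨fun m => n + m, fun i k hik => Nat.add_lt_add_left hik n, ?_⟩
    exact mem_iInter.2 fun m => hn (n + m) (Nat.le_add_right n m)
  constructor
  · intro p
    have h1 : liminfM ll (fun _ => p) = Jminus ll p := by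
      ext x
      simp only [liminfM, mem_iUnion, mem_iInter]
      exact ⟨fun ⟨n, hn⟩ => hn n le_rfl, fun hx => ⟨0, fun m _ => hx⟩⟩
    have h2 : limsupM ll (fun _ => p) = Jminus ll p := by
      ext x
      simp only [limsupM, mem_setOf_eq, mem_iUnion, mem_iInter, exists_prop]
      exact ⟨fun ⟨k, _, hx⟩ => hx 0, fun hx => ⟨id, strictMono_id, fun _ => hx⟩⟩
    have h3 : Iminus ll (Jminus ll p) = pastOf ll p := by
      ext x
      exact ⟨fun ⟨y, hy, hx⟩ => hy.2 hx, fun hx => ⟨p, ⟨subset_rfl, subset_rfl⟩, hx⟩⟩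
    ext v
    simp only [Lplus, mem_setOf_eq, mem_singleton_iff, h1, h2, h3, true_and]
    exact ⟨fun hv => (hdist p v hv).symm, fun hv => by rw [hv]⟩
  · intro a p hLa j hj
    have hp : p ∈ Lplus ll a := by rw [hLa]; exact mem_singleton p
    obtain ⟨heq, hpast⟩ := hp
    have hIeq : Iminus ll (limsupM ll a) = pastOf ll p := heq ▸ hpast
    have hsub1 : liminfM ll a ⊆ liminfM ll (a ∘ j) := by
      rintro x hx
      simp only [liminfM, mem_iUnion, mem_iInter] at hx ⊢
      obtain ⟨n, hn⟩ := hx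
      exact ⟨n, fun m hm => hn (j m) (hm.trans hj.le_apply)⟩
    have hsub2 : limsupM ll (a ∘ j) ⊆ limsupM ll a := by
      rintro x hx
      simp only [limsupM, mem_setOf_eq, mem_iUnion, mem_iInter, exists_prop] at hx ⊢
      obtain ⟨k, hk, hx⟩ := hx
      exact ⟨j ∘ k, hj.comp hk, hx⟩
    have A := hIm _ _ hsub1
    have B := hIm _ _ ((hle (a ∘ j)).trans hsub2)
    have C := hIm _ _ (hle (a ∘ j))
    have D := hIm _ _ hsub2
    rw [hpast] at A
    rw [hIeq] at B D
    have key1 : Iminus ll (liminfM ll (a ∘ j)) = pastOf ll p := subset_antisymm B A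
    have key2 : Iminus ll (limsupM ll (a ∘ j)) = pastOf ll p :=
      subset_antisymm D (key1 ▸ C)
    ext v
    simp only [Lplus, mem_setOf_eq, mem_singleton_iff, key1, key2, true_and]
    exact ⟨fun hv => (hdist p v hv).symm, fun hv => by rw [hv]⟩
end

section
/- Let $X$ be a well-behaved chronological space. Two distinct past subsets have distinct closures: if $A, B \subseteq X$ are past sets with $\mathrm{cl}(A) = \mathrm{cl}(B)$, then $A = B$. -/
open Set

variable {X : Type*}

/-- In a regular chronological space, a past set is determined by its closure:
past sets with equal closures are equal. -/
theorem past_eq_of_closure_eq [TopologicalSpace X] (ll : X → X → Prop)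
    (h : IsChronSet ll)
    (hopen : ∀ p : X, IsOpen (futureOf ll p) ∧ IsOpen (pastOf ll p))
    (A B : Set X) (hA : IsPast ll A) (hB : IsPast ll B)
    (hcl : closure A = closure B) : A = B := by
  have key : ∀ C D : Set X, IsPast ll C → IsPast ll D → closure C = closure D →
      C ⊆ D := by
    intro C D hC hD hcd x hx
    rw [hC] at hx
    obtain ⟨a, haC, hxa⟩ := hx
    have haclD : a ∈ closure D := by
      rw [← hcd]; exact subset_closure haC
    have : (futureOf ll x ∩ D).Nonempty := by
      have := mem_closure_iff.mp haclD (futureOf ll x) (hopen x).1 hxa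
      exact this
    obtain ⟨b, hbf, hbD⟩ := this
    rw [hD]
    exact ⟨b, hbD, hbf⟩
  exact subset_antisymm (key A B hA hB hcl) (key B A hB hA hcl.symm)
end
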